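/- For the spherical function Φ_t(z) = ∏_{i=1}^n (1+z_i²)^{t/2} on the cone C_n (with multiplicities d ≥ 1 integer, e ≥ 0 integer), if t < -(d(n-1) + (e+1)/2) then ∫_{C_n} ∏_i z_i^e (1+z_i²)^t ∏_{i<j}(z_i²-z_j²)^d dz < ∞; i.e. Φ_t is square-integrable against the measure P_n^{e+1} V_n^d d^×z where P_n(z) = ∏ z_i, V_n(z) = ∏_{i<j}(z_i²-z_j²), d^×z = ∏ dz_i/z_i. -/
import Mathlib


open MeasureTheory Finset

/-- The open cone `C_n = {z ∈ ℝⁿ : z₁ > z₂ > ⋯ > z_n > 0}`. -/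
def cone (n : ℕ) : Set (Fin n → ℝ) :=
  {z | (∀ i j : Fin n, i < j → z j < z i) ∧ ∀ i, 0 < z i}

lemma aux_cont (r : ℝ) : Continuous (fun x : ℝ => (1 + x ^ 2) ^ r) := by
  apply Continuous.rpow_const (by continuity)
  intro x; left; positivity

lemma aux_integrable {r : ℝ} (hr : r < -(1/2 : ℝ)) :
    IntegrableOn (fun x : ℝ => (1 + x ^ 2) ^ r) (Set.Ioi 0) := by
  have h1 : IntegrableOn (fun x : ℝ => (1 + x ^ 2) ^ r) (Set.Ioc 0 1) :=
    ((aux_cont r).continuousOn.integrableOn_Icc (a := 0) (b := 1)).mono_set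
      Set.Ioc_subset_Icc_self
  have h2 : IntegrableOn (fun x : ℝ => (1 + x ^ 2) ^ r) (Set.Ioi 1) := by
    have hbase : IntegrableOn (fun x : ℝ => x ^ (2 * r)) (Set.Ioi 1) :=
      integrableOn_Ioi_rpow_of_lt (by linarith) one_pos
    refine hbase.mono' ((aux_cont r).aestronglyMeasurable.restrict) ?_
    filter_upwards [ae_restrict_mem measurableSet_Ioi] with x hx
    rw [Real.norm_eq_abs, abs_of_nonneg (by positivity)]
    have hx1 : (1:ℝ) < x := hx
    calc (1 + x ^ 2) ^ r ≤ (x ^ 2) ^ r :=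
          Real.rpow_le_rpow_of_nonpos (by positivity) (by linarith) (by linarith)
      _ = x ^ (2 * r) := by
          rw [← Real.rpow_natCast x 2, ← Real.rpow_mul (by linarith)]
          norm_num
  have : Set.Ioi (0:ℝ) = Set.Ioc 0 1 ∪ Set.Ioi 1 := (Set.Ioc_union_Ioi_eq_Ioi one_pos.le).symm
  rw [this]
  exact h1.union h2

lemma measurableSet_cone (n : ℕ) : MeasurableSet (cone n) := by
  have : cone n = (⋂ i, ⋂ j, ⋂ _h : (i : Fin n) < j, {z : Fin n → ℝ | z j < z i}) ∩
      ⋂ i, {z : Fin n → ℝ | 0 < z i} := by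
    ext z
    simp only [cone, Set.mem_inter_iff, Set.mem_iInter, Set.mem_setOf_eq]
  rw [this]
  exact (MeasurableSet.iInter fun i => MeasurableSet.iInter fun j =>
      MeasurableSet.iInter fun _ =>
        measurableSet_lt (measurable_pi_apply j) (measurable_pi_apply i)).inter
    (MeasurableSet.iInter fun i => measurableSet_lt measurable_const (measurable_pi_apply i))

/-- The spherical function `Φ_t(z) = ∏ᵢ (1+zᵢ²)^{t/2}` is square-integrable against the measure
`P_n^{e+1} V_n^d d^×z` on `C_n` when `t < -(d(n-1) + (e+1)/2)`; i.e. the integral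
`∫_{C_n} ∏ᵢ zᵢ^e (1+zᵢ²)^t ∏_{i<j}(zᵢ²-zⱼ²)^d dz` is finite.  Here `d ≥ 1` and `e ≥ 0` are
integers. -/
theorem spherical_vector_square_integrable (n : ℕ) (hn : 1 ≤ n) (d e : ℕ) (hd : 1 ≤ d) (t : ℝ)
    (ht : t < -((d : ℝ) * ((n : ℝ) - 1) + ((e : ℝ) + 1) / 2)) :
    IntegrableOn
      (fun z : Fin n → ℝ =>
        (∏ i, z i ^ e * (1 + z i ^ 2) ^ t) *
          ∏ i, ∏ j ∈ Finset.univ.filter (fun j => i < j), (z i ^ 2 - z j ^ 2) ^ d)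
      (cone n) volume := by
  set r : ℝ := (e : ℝ) / 2 + t + (d : ℝ) * ((n : ℝ) - 1) with hr_def
  have hr : r < -(1/2 : ℝ) := by rw [hr_def]; linarith
  -- the dominating one-variable function
  set G : ℝ → ℝ := (Set.Ioi (0:ℝ)).indicator (fun x => (1 + x ^ 2) ^ r) with hG_def
  have hG : Integrable G := (aux_integrable hr).integrable_indicator measurableSet_Ioi
  have hF : Integrable (fun z : Fin n → ℝ => ∏ i, G (z i)) :=
    Integrable.fintype_prod (f := fun _ : Fin n => G) fun _ => hG
  -- measurability of the integrand
  have hmf : Measurable (fun z : Fin n → ℝ =>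
      (∏ i, z i ^ e * (1 + z i ^ 2) ^ t) *
        ∏ i, ∏ j ∈ Finset.univ.filter (fun j => i < j), (z i ^ 2 - z j ^ 2) ^ d) := by
    apply Measurable.mul
    · exact Finset.measurable_prod _ fun i _ =>
        ((measurable_pi_apply i).pow_const e).mul
          ((aux_cont t).measurable.comp (measurable_pi_apply i))
    · exact Finset.measurable_prod _ fun i _ => Finset.measurable_prod _ fun j _ =>
        (((measurable_pi_apply i).pow_const 2).sub
          ((measurable_pi_apply j).pow_const 2)).pow_const d
  refine (hF.integrableOn).mono' hmf.aestronglyMeasurable.restrict ?_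
  filter_upwards [ae_restrict_mem (measurableSet_cone n)] with z hz
  obtain ⟨hlt, hpos⟩ := hz
  -- nonnegativity of every factor
  have hsub : ∀ i : Fin n, ∀ j ∈ Finset.univ.filter (fun j => i < j),
      0 ≤ z i ^ 2 - z j ^ 2 := by
    intro i j hj
    have hij : i < j := (Finset.mem_filter.1 hj).2
    have h1 := hlt i j hij
    have h2 := hpos j
    nlinarith
  have hA : (0:ℝ) ≤ ∏ i, z i ^ e * (1 + z i ^ 2) ^ t :=
    Finset.prod_nonneg fun i _ =>
      mul_nonneg (pow_nonneg (hpos i).le e) (Real.rpow_nonneg (by positivity) t)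
  have hB : (0:ℝ) ≤ ∏ i, ∏ j ∈ Finset.univ.filter (fun j => i < j), (z i ^ 2 - z j ^ 2) ^ d :=
    Finset.prod_nonneg fun i _ => Finset.prod_nonneg fun j hj =>
      pow_nonneg (hsub i j hj) d
  rw [Real.norm_eq_abs, abs_of_nonneg (mul_nonneg hA hB)]
  -- rewrite G at the points z i
  have hGz : ∀ i : Fin n, G (z i) = (1 + z i ^ 2) ^ r := fun i =>
    Set.indicator_of_mem (hpos i) _
  calc (∏ i, z i ^ e * (1 + z i ^ 2) ^ t) *
          ∏ i, ∏ j ∈ Finset.univ.filter (fun j => i < j), (z i ^ 2 - z j ^ 2) ^ d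
      = ∏ i, (z i ^ e * (1 + z i ^ 2) ^ t) *
          ∏ j ∈ Finset.univ.filter (fun j => i < j), (z i ^ 2 - z j ^ 2) ^ d := by
        rw [← Finset.prod_mul_distrib]
    _ ≤ ∏ i, (1 + z i ^ 2) ^ r := by
        apply Finset.prod_le_prod
        · intro i _
          exact mul_nonneg
            (mul_nonneg (pow_nonneg (hpos i).le e) (Real.rpow_nonneg (by positivity) t))
            (Finset.prod_nonneg fun j hj => pow_nonneg (hsub i j hj) d)
        intro i _
        set x := z i with hx_def
        have hx : 0 < x := hpos i
        have hbase : (0:ℝ) < 1 + x ^ 2 := by positivity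
        have hone : (1:ℝ) ≤ 1 + x ^ 2 := by nlinarith
        -- bound the Vandermonde part
        have hcard : (Finset.univ.filter (fun j => i < j)).card ≤ n - 1 := by
          have hsubset : Finset.univ.filter (fun j => i < j) ⊆ Finset.univ.erase i := by
            intro j hj
            exact Finset.mem_erase.2 ⟨(Finset.mem_filter.1 hj).2.ne', Finset.mem_univ j⟩
          calc (Finset.univ.filter (fun j => i < j)).card
              ≤ (Finset.univ.erase i).card := Finset.card_le_card hsubset
            _ = n - 1 := by
                rw [Finset.card_erase_of_mem (Finset.mem_univ i)]
                simp
        have hV : ∏ j ∈ Finset.univ.filter (fun j => i < j), (x ^ 2 - z j ^ 2) ^ d ≤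
            (1 + x ^ 2) ^ (d * (n - 1)) := by
          calc ∏ j ∈ Finset.univ.filter (fun j => i < j), (x ^ 2 - z j ^ 2) ^ d
              ≤ ∏ _j ∈ Finset.univ.filter (fun j => i < j), (1 + x ^ 2) ^ d := by
                apply Finset.prod_le_prod
                · intro j hj; exact pow_nonneg (hsub i j hj) d
                · intro j hj
                  apply pow_le_pow_left₀ (hsub i j hj)
                  have := sq_nonneg (z j)
                  nlinarith
            _ = (1 + x ^ 2) ^ (d * (Finset.univ.filter (fun j => i < j)).card) := by
                rw [Finset.prod_const, ← pow_mul]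
            _ ≤ (1 + x ^ 2) ^ (d * (n - 1)) :=
                pow_le_pow_right₀ hone (Nat.mul_le_mul_left d hcard)
        -- bound the first part
        have hxle : x ≤ (1 + x ^ 2) ^ ((1:ℝ)/2) := by
          have h1 : x = (x ^ 2) ^ ((1:ℝ)/2) := by
            rw [← Real.rpow_natCast x 2, ← Real.rpow_mul hx.le]
            norm_num
          rw [h1]
          exact Real.rpow_le_rpow (by positivity) (by nlinarith) (by norm_num)
        have hP : x ^ e * (1 + x ^ 2) ^ t ≤ (1 + x ^ 2) ^ ((e : ℝ)/2 + t) := by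
          have h2 : x ^ e ≤ (1 + x ^ 2) ^ ((e : ℝ)/2) := by
            calc x ^ e ≤ ((1 + x ^ 2) ^ ((1:ℝ)/2)) ^ e := pow_le_pow_left₀ hx.le hxle e
              _ = (1 + x ^ 2) ^ ((e : ℝ)/2) := by
                  rw [← Real.rpow_natCast ((1 + x ^ 2) ^ ((1:ℝ)/2)) e,
                    ← Real.rpow_mul hbase.le]
                  ring_nf
          calc x ^ e * (1 + x ^ 2) ^ t ≤ (1 + x ^ 2) ^ ((e : ℝ)/2) * (1 + x ^ 2) ^ t :=
                mul_le_mul_of_nonneg_right h2 (Real.rpow_nonneg hbase.le t)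
            _ = (1 + x ^ 2) ^ ((e : ℝ)/2 + t) := (Real.rpow_add hbase _ _).symm
        -- combine
        have hcast : ((d * (n - 1) : ℕ) : ℝ) = (d : ℝ) * ((n : ℝ) - 1) := by
          push_cast [Nat.cast_sub hn]
          ring
        calc (x ^ e * (1 + x ^ 2) ^ t) *
              ∏ j ∈ Finset.univ.filter (fun j => i < j), (x ^ 2 - z j ^ 2) ^ d
            ≤ (1 + x ^ 2) ^ ((e : ℝ)/2 + t) * (1 + x ^ 2) ^ (d * (n - 1)) := by
              apply mul_le_mul hP hV
                (Finset.prod_nonneg fun j hj => pow_nonneg (hsub i j hj) d)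
                (Real.rpow_nonneg hbase.le _)
          _ = (1 + x ^ 2) ^ r := by
              rw [← Real.rpow_natCast (1 + x ^ 2) (d * (n - 1)), hcast,
                ← Real.rpow_add hbase, hr_def]
    _ = ∏ i, G (z i) := by
        exact (Finset.prod_congr rfl fun i _ => (hGz i)).symm
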